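/- arXiv:2410.12689 — 3 statements merged into one kernel-verified Lean document; each statement's English description precedes it below -/
import Mathlib

section
/- Let P₁ and P₂ be k×k row-stochastic matrices and let π₁, π₂ be probability vectors in ℝᵏ. Define r ∈ ℝᵏ by r(i) = √(π₁(i)·π₂(i)), the k×k matrix R by R(i,j) = √(P₁(i,j)·P₂(i,j)), and let 𝟙 denote the all-ones vector in ℝᵏ. Then the sequence a(n) = rᵀ Rⁿ 𝟙 is nonincreasing in n, takes values in the interval [0,1], and converges as n → ∞. -/
open Matrix BigOperators Filter

/-- Row sums of entrywise `√(p·q)` of two nonneg vectors summing to one are ≤ 1. -/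
lemma sqrt_sum_le_one {k : ℕ} (p q : Fin k → ℝ) (hp : ∀ i, 0 ≤ p i) (hq : ∀ i, 0 ≤ q i)
    (hps : ∑ i, p i = 1) (hqs : ∑ i, q i = 1) :
    ∑ i, Real.sqrt (p i * q i) ≤ 1 := by
  have h : ∑ i, Real.sqrt (p i) * Real.sqrt (q i) ≤
      Real.sqrt (∑ i, p i) * Real.sqrt (∑ i, q i) :=
    Real.sum_sqrt_mul_sqrt_le _ hp hq
  calc ∑ i, Real.sqrt (p i * q i) = ∑ i, Real.sqrt (p i) * Real.sqrt (q i) := by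
        simp [Real.sqrt_mul (hp _)]
    _ ≤ Real.sqrt (∑ i, p i) * Real.sqrt (∑ i, q i) := h
    _ = 1 := by simp [hps, hqs]

/-- the sequence `a n = rᵀ Rⁿ 𝟙` is nonincreasing, takes values in `[0,1]`,
and converges as `n → ∞`. -/
theorem stmt_1 (k : ℕ) (P1 P2 : Matrix (Fin k) (Fin k) ℝ) (pi1 pi2 : Fin k → ℝ)
    (hP1 : ∀ i j, 0 ≤ P1 i j) (hP1r : ∀ i, ∑ j, P1 i j = 1)
    (hP2 : ∀ i j, 0 ≤ P2 i j) (hP2r : ∀ i, ∑ j, P2 i j = 1)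
    (hpi1 : ∀ i, 0 ≤ pi1 i) (hpi1s : ∑ i, pi1 i = 1)
    (hpi2 : ∀ i, 0 ≤ pi2 i) (hpi2s : ∑ i, pi2 i = 1)
    (r : Fin k → ℝ) (hr : ∀ i, r i = Real.sqrt (pi1 i * pi2 i))
    (R : Matrix (Fin k) (Fin k) ℝ) (hR : ∀ i j, R i j = Real.sqrt (P1 i j * P2 i j)) :
    Antitone (fun n : ℕ => r ⬝ᵥ (R ^ n).mulVec (fun _ => (1 : ℝ))) ∧
    (∀ n : ℕ, r ⬝ᵥ (R ^ n).mulVec (fun _ => (1 : ℝ)) ∈ Set.Icc (0 : ℝ) 1) ∧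
    ∃ L : ℝ, Tendsto (fun n : ℕ => r ⬝ᵥ (R ^ n).mulVec (fun _ => (1 : ℝ))) atTop (nhds L) := by
  have hRnn : ∀ i j, 0 ≤ R i j := fun i j => (hR i j) ▸ Real.sqrt_nonneg _
  have hrnn : ∀ i, 0 ≤ r i := fun i => (hr i) ▸ Real.sqrt_nonneg _
  have hRrow : ∀ i, ∑ j, R i j ≤ 1 := by
    intro i
    simpa [hR] using sqrt_sum_le_one (fun j => P1 i j) (fun j => P2 i j)
      (hP1 i) (hP2 i) (hP1r i) (hP2r i)
  have hrsum : ∑ i, r i ≤ 1 := by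
    simpa [hr] using sqrt_sum_le_one pi1 pi2 hpi1 hpi2 hpi1s hpi2s
  set v : ℕ → Fin k → ℝ := fun n => (R ^ n).mulVec (fun _ => (1 : ℝ)) with hv
  have hsucc : ∀ n, v (n + 1) = R.mulVec (v n) := by
    intro n
    rw [hv]
    simp only [pow_succ', ← Matrix.mulVec_mulVec]
  have hv0 : v 0 = fun _ => (1 : ℝ) := by
    simp [hv, Matrix.one_mulVec]
  have hvnn : ∀ n i, 0 ≤ v n i := by
    intro n
    induction n with
    | zero => intro i; simp [hv]
    | succ n ih =>
      intro i
      rw [hsucc n]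
      simp only [Matrix.mulVec, dotProduct]
      exact Finset.sum_nonneg fun j _ => mul_nonneg (hRnn i j) (ih j)
  have hmono : ∀ n i, v (n + 1) i ≤ v n i := by
    intro n
    induction n with
    | zero =>
      intro i
      rw [hsucc 0, hv0]
      simpa [Matrix.mulVec, dotProduct] using hRrow i
    | succ n ih =>
      intro i
      conv_lhs => rw [hsucc (n+1)]
      conv_rhs => rw [hsucc n]
      simp only [Matrix.mulVec, dotProduct]
      exact Finset.sum_le_sum fun j _ => mul_le_mul_of_nonneg_left (ih j) (hRnn i j)
  have hle1 : ∀ n i, v n i ≤ 1 := by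
    intro n
    induction n with
    | zero => intro i; rw [hv0]
    | succ n ih => intro i; exact (hmono n i).trans (ih i)
  have hAnti : Antitone (fun n : ℕ => r ⬝ᵥ v n) := by
    apply antitone_nat_of_succ_le
    intro n
    exact Finset.sum_le_sum fun i _ => mul_le_mul_of_nonneg_left (hmono n i) (hrnn i)
  have hIcc : ∀ n, r ⬝ᵥ v n ∈ Set.Icc (0 : ℝ) 1 := by
    intro n
    constructor
    · exact Finset.sum_nonneg fun i _ => mul_nonneg (hrnn i) (hvnn n i)
    · calc r ⬝ᵥ v n ≤ ∑ i, r i := Finset.sum_le_sum fun i _ =>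
            (mul_le_of_le_one_right (hrnn i) (hle1 n i))
        _ ≤ 1 := hrsum
  refine ⟨hAnti, hIcc, ?_⟩
  exact ⟨_, tendsto_atTop_ciInf hAnti ⟨0, fun x hx => by
    obtain ⟨n, rfl⟩ := hx; exact (hIcc n).1⟩⟩
end

section
/- Let P₁ and P₂ be k×k row-stochastic matrices and define the k×k matrix R by R(i,j) = √(P₁(i,j)·P₂(i,j)). Then every complex eigenvalue of R has modulus at most 1. -/
open Matrix BigOperators

/-! Gershgorin's circle theorem bounds every eigenvalue of `R` by a row sum `∑ⱼ √(P₁(i,j) P₂(i,j))`,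
and by Cauchy–Schwarz such a row sum is at most `√(∑ⱼ P₁(i,j)) √(∑ⱼ P₂(i,j)) = 1`. -/

theorem Matrix.norm_le_of_mem_spectrum_of_sum_norm_le {K n : Type*} [NormedField K] [Fintype n]
    [DecidableEq n] {A : Matrix n n K} {r : ℝ} (hA : ∀ i, ∑ j, ‖A i j‖ ≤ r) {μ : K}
    (hμ : μ ∈ spectrum K A) : ‖μ‖ ≤ r := by
  rw [← Matrix.spectrum_toLin', ← Module.End.hasEigenvalue_iff_mem_spectrum] at hμ
  obtain ⟨i, hi⟩ := eigenvalue_mem_ball hμ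
  rw [Metric.mem_closedBall, dist_eq_norm] at hi
  calc ‖μ‖ ≤ ‖μ - A i i‖ + ‖A i i‖ := norm_le_norm_sub_add μ (A i i)
    _ ≤ ∑ j ∈ Finset.univ.erase i, ‖A i j‖ + ‖A i i‖ := by gcongr
    _ = ∑ j, ‖A i j‖ := Finset.sum_erase_add _ _ (Finset.mem_univ i)
    _ ≤ r := hA i

theorem Real.sum_sqrt_mul_le_one {ι : Type*} (s : Finset ι) {p q : ι → ℝ} (hp : ∀ i, 0 ≤ p i)
    (hq : ∀ i, 0 ≤ q i) (hps : ∑ i ∈ s, p i = 1) (hqs : ∑ i ∈ s, q i = 1) :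
    ∑ i ∈ s, √(p i * q i) ≤ 1 := by
  simp_rw [Real.sqrt_mul (hp _)]
  calc ∑ i ∈ s, √(p i) * √(q i) ≤ √(∑ i ∈ s, p i) * √(∑ i ∈ s, q i) :=
        Real.sum_sqrt_mul_sqrt_le s hp hq
    _ = 1 := by rw [hps, hqs, Real.sqrt_one, one_mul]

/-- every complex eigenvalue of `R(i,j) = √(P₁(i,j)·P₂(i,j))` has modulus
at most `1`. -/
theorem stmt_3 (k : ℕ) (P1 P2 : Matrix (Fin k) (Fin k) ℝ)
    (hP1 : ∀ i j, 0 ≤ P1 i j) (hP1r : ∀ i, ∑ j, P1 i j = 1)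
    (hP2 : ∀ i j, 0 ≤ P2 i j) (hP2r : ∀ i, ∑ j, P2 i j = 1)
    (R : Matrix (Fin k) (Fin k) ℝ) (hR : ∀ i j, R i j = Real.sqrt (P1 i j * P2 i j))
    (μ : ℂ) (hμ : μ ∈ spectrum ℂ (R.map ((↑) : ℝ → ℂ))) :
    ‖μ‖ ≤ 1 := by
  refine Matrix.norm_le_of_mem_spectrum_of_sum_norm_le (fun i => ?_) hμ
  have hnorm : ∀ j, ‖(R.map ((↑) : ℝ → ℂ)) i j‖ = √(P1 i j * P2 i j) := fun j => by
    rw [Matrix.map_apply, Complex.norm_real, hR, Real.norm_of_nonneg (Real.sqrt_nonneg _)]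
  simp_rw [hnorm]
  exact Real.sum_sqrt_mul_le_one _ (hP1 i) (hP2 i) (hP1r i) (hP2r i)
end

section
/- On the set of probability vectors in ℝᵐ, the Bhattacharyya angle d(p,q) = 2·arccos(BC(p,q)), where BC(p,q) = Σ_i √(p(i)·q(i)), is a metric: it is nonnegative, d(p,q) = d(q,p), d(p,q) = 0 if and only if p = q, and d(p,s) ≤ d(p,q) + d(q,s) for all probability vectors p, q, s in ℝᵐ. -/
open BigOperators

/-- A probability vector in `ℝᵐ`: nonnegative entries summing to `1`. -/
def IsProbVec {m : ℕ} (p : Fin m → ℝ) : Prop :=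
  (∀ i, 0 ≤ p i) ∧ ∑ i, p i = 1

/-- The Bhattacharyya angle `d(p,q) = 2 · arccos (Σ_i √(p i · q i))`. -/
noncomputable def bhatAngle {m : ℕ} (p q : Fin m → ℝ) : ℝ :=
  2 * Real.arccos (∑ i, Real.sqrt (p i * q i))

/-!
The map `p ↦ √p` sends probability vectors to unit vectors of Euclidean space, and
`BC(p, q)` is the inner product of `√p` and `√q`. Hence `bhatAngle p q` is twice the angle
between `√p` and `√q`, and the metric axioms are those of the angle metric on the unit sphere.
-/

open InnerProductGeometry

lemma InnerProductGeometry.angle_eq_zero_iff_of_norm_eq_one {V : Type*} [NormedAddCommGroup V]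
    [InnerProductSpace ℝ V] {x y : V} (hx : ‖x‖ = 1) (hy : ‖y‖ = 1) :
    angle x y = 0 ↔ x = y := by
  constructor
  · intro h
    rw [← inner_eq_one_iff_of_norm_eq_one (𝕜 := ℝ) hx hy, inner_eq_cos_angle_of_norm_eq_one hx hy,
      h, Real.cos_zero]
  · rintro rfl
    exact angle_self (norm_ne_zero_iff.mp (by rw [hx]; exact one_ne_zero))

section SqrtEmbedding

variable {m : ℕ}

noncomputable def sqrtVec (p : Fin m → ℝ) : EuclideanSpace ℝ (Fin m) :=
  WithLp.toLp 2 fun i => Real.sqrt (p i)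

lemma inner_sqrtVec {p : Fin m → ℝ} (hp : ∀ i, 0 ≤ p i) (q : Fin m → ℝ) :
    inner ℝ (sqrtVec p) (sqrtVec q) = ∑ i, Real.sqrt (p i * q i) := by
  refine Finset.sum_congr rfl fun i _ => ?_
  simp [sqrtVec, Real.sqrt_mul (hp i), mul_comm]

lemma IsProbVec.norm_sqrtVec {p : Fin m → ℝ} (hp : IsProbVec p) : ‖sqrtVec p‖ = 1 := by
  simp [EuclideanSpace.norm_eq, sqrtVec, Real.sq_sqrt (hp.1 _), hp.2]

lemma sqrtVec_inj {p q : Fin m → ℝ} (hp : ∀ i, 0 ≤ p i) (hq : ∀ i, 0 ≤ q i) :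
    sqrtVec p = sqrtVec q ↔ p = q := by
  refine ⟨fun h => funext fun i => ?_, congrArg sqrtVec⟩
  rw [← Real.sqrt_inj (hp i) (hq i)]
  exact congrArg (· i) h

lemma bhatAngle_eq_two_mul_angle {p q : Fin m → ℝ} (hp : IsProbVec p) (hq : IsProbVec q) :
    bhatAngle p q = 2 * angle (sqrtVec p) (sqrtVec q) := by
  rw [bhatAngle, angle, hp.norm_sqrtVec, hq.norm_sqrtVec, mul_one, div_one, inner_sqrtVec hp.1]

lemma bhatAngle_nonneg (p q : Fin m → ℝ) : 0 ≤ bhatAngle p q :=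
  mul_nonneg zero_le_two (Real.arccos_nonneg _)

lemma bhatAngle_comm (p q : Fin m → ℝ) : bhatAngle p q = bhatAngle q p := by
  simp only [bhatAngle, mul_comm (p _)]

end SqrtEmbedding

/-- the Bhattacharyya angle is a metric on the set of probability
vectors in `ℝᵐ`. -/
theorem stmt_8 (m : ℕ) :
    (∀ p q : Fin m → ℝ, IsProbVec p → IsProbVec q → 0 ≤ bhatAngle p q) ∧
    (∀ p q : Fin m → ℝ, IsProbVec p → IsProbVec q → bhatAngle p q = bhatAngle q p) ∧
    (∀ p q : Fin m → ℝ, IsProbVec p → IsProbVec q → (bhatAngle p q = 0 ↔ p = q)) ∧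
    (∀ p q s : Fin m → ℝ, IsProbVec p → IsProbVec q → IsProbVec s →
      bhatAngle p s ≤ bhatAngle p q + bhatAngle q s) := by
  refine ⟨fun p q _ _ => bhatAngle_nonneg p q, fun p q _ _ => bhatAngle_comm p q,
    fun p q hp hq => ?_, fun p q s hp hq hs => ?_⟩
  · rw [bhatAngle_eq_two_mul_angle hp hq, mul_eq_zero, or_iff_right two_ne_zero,
      angle_eq_zero_iff_of_norm_eq_one hp.norm_sqrtVec hq.norm_sqrtVec, sqrtVec_inj hp.1 hq.1]
  · rw [bhatAngle_eq_two_mul_angle hp hs, bhatAngle_eq_two_mul_angle hp hq,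
      bhatAngle_eq_two_mul_angle hq hs]
    linarith [angle_le_angle_add_angle (sqrtVec p) (sqrtVec q) (sqrtVec s)]
end
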